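/- Suppose n is even and u, v ∈ ℝ. Set T̃ = −(V⊗V)T on ℂⁿ⊗ℂⁿ, and on (ℂⁿ)^{⊗2ℓ} define H'_ℓ = Σ_{x=−ℓ+1}^{ℓ−1} (u T̃_{x,x+1} + v Q_{x,x+1}) and H̃_ℓ = Σ_{x=−ℓ+1}^{ℓ−1} (u T_{x,x+1} + v P_{x,x+1}). Let W = W_{−ℓ+1} ⊗ W_{−ℓ+2} ⊗ … ⊗ W_ℓ be the staggered unitary with W_x = V for x ∈ {−ℓ+1, −ℓ+3, −ℓ+5, …} and W_x = I otherwise. Then W H'_ℓ W* = H̃_ℓ; in particular H'_ℓ and H̃_ℓ are unitarily equivalent and have the same spectrum. -/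

import Mathlib

open Matrix BigOperators Kronecker

/-- The transposition operator `T` on `ℂⁿ ⊗ ℂⁿ`. -/
noncomputable def transOp (n : ℕ) : Matrix (Fin n × Fin n) (Fin n × Fin n) ℂ :=
  fun p q => if p.1 = q.2 ∧ p.2 = q.1 then 1 else 0

/-- The vector `ψ = n^{-1/2} Σ_α |α⟩ ⊗ |α⟩`. -/
noncomputable def psiVec (n : ℕ) : Fin n × Fin n → ℂ :=
  fun p => if p.1 = p.2 then ((Real.sqrt n : ℂ))⁻¹ else 0

/-- The orthogonal projection `Q = |ψ⟩⟨ψ|`. -/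
noncomputable def QOp (n : ℕ) : Matrix (Fin n × Fin n) (Fin n × Fin n) ℂ :=
  fun p q => psiVec n p * (starRingEnd ℂ) (psiVec n q)

/-- The singlet vector `φ = n^{-1/2} Σ_α (-1)^{S-α} |α⟩ ⊗ |-α⟩`. -/
noncomputable def phiVec (n : ℕ) : Fin n × Fin n → ℂ :=
  fun p => if (p.1 : ℕ) + (p.2 : ℕ) = n - 1 then
    ((-1 : ℂ)) ^ ((n - 1) - (p.1 : ℕ)) * ((Real.sqrt n : ℂ))⁻¹
  else 0

/-- The orthogonal projection `P = |φ⟩⟨φ|`. -/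
noncomputable def Pproj (n : ℕ) : Matrix (Fin n × Fin n) (Fin n × Fin n) ℂ :=
  fun p q => phiVec n p * (starRingEnd ℂ) (phiVec n q)

/-- The operator `V |α⟩ = (-1)^{S-α} |-α⟩`. -/
noncomputable def Vop (n : ℕ) : Matrix (Fin n) (Fin n) ℂ :=
  fun i j => if (i : ℕ) + (j : ℕ) = n - 1 then ((-1 : ℂ)) ^ ((n - 1) - (j : ℕ)) else 0

/-- The modified transposition `T̃ = -(V ⊗ V) T`. -/
noncomputable def transOpTilde (n : ℕ) : Matrix (Fin n × Fin n) (Fin n × Fin n) ℂ :=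
  -((Vop n ⊗ₖ Vop n) * transOp n)

/-- A two-body operator `A` acting on the tensor factors at positions `p, q` of the chain. -/
noncomputable def bondOp (n ℓ : ℕ) (A : Matrix (Fin n × Fin n) (Fin n × Fin n) ℂ)
    (p q : Fin (2 * ℓ)) :
    Matrix ((Fin (2 * ℓ)) → Fin n) ((Fin (2 * ℓ)) → Fin n) ℂ :=
  fun σ τ => A (σ p, σ q) (τ p, τ q) *
    ∏ y ∈ (Finset.univ.erase p).erase q, (if σ y = τ y then (1 : ℂ) else 0)

/-- The chain Hamiltonian `Σ_{x=-ℓ+1}^{ℓ-1} A_{x,x+1}` on `(ℂⁿ)^{⊗ 2ℓ}`; sites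
`-ℓ+1, …, ℓ` are encoded as positions `0, …, 2ℓ-1` (site `x` ↦ position `x + ℓ - 1`). -/
noncomputable def chainH (n ℓ : ℕ) (A : Matrix (Fin n × Fin n) (Fin n × Fin n) ℂ) :
    Matrix ((Fin (2 * ℓ)) → Fin n) ((Fin (2 * ℓ)) → Fin n) ℂ :=
  ∑ x ∈ Finset.range (2 * ℓ - 1),
    if h : x + 1 < 2 * ℓ then bondOp n ℓ A ⟨x, by omega⟩ ⟨x + 1, h⟩ else 0

/-- The staggered unitary `W = V ⊗ I ⊗ V ⊗ I ⊗ ⋯`: `V` acts at the positions of the odd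
sites `-ℓ+1, -ℓ+3, …` (even positions), the identity elsewhere. -/
noncomputable def staggeredW (n ℓ : ℕ) :
    Matrix ((Fin (2 * ℓ)) → Fin n) ((Fin (2 * ℓ)) → Fin n) ℂ :=
  fun σ τ => ∏ p : Fin (2 * ℓ),
    if Even (p : ℕ) then Vop n (σ p) (τ p) else (if σ p = τ p then 1 else 0)

/-!
`W` is a Kronecker product of one-site unitaries, so it conjugates each bond term `A_{x,x+1}`
by the two-site factor `V ⊗ 1` or `1 ⊗ V` sitting on that bond. For even `n`, `V` is
antisymmetric with `V² = -1`, hence `(V ⊗ 1) T̃ = -(V² ⊗ V) T = (1 ⊗ V) T = T (V ⊗ 1)` and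
likewise for `1 ⊗ V`; and `(1 ⊗ V) ψ = φ`, `(V ⊗ 1) ψ = -φ`, which carries `Q = |ψ⟩⟨ψ|` to
`P = |φ⟩⟨φ|`. Eigenvalues are preserved by any unitary conjugation.
-/

section KroneckerPi

variable {ι α β γ R : Type*} [Fintype ι]

def kroneckerPi [CommMonoid R] (m : ι → Matrix α β R) : Matrix (ι → α) (ι → β) R :=
  fun σ τ => ∏ i, m i (σ i) (τ i)

theorem kroneckerPi_mul [DecidableEq ι] [CommSemiring R] [Fintype β] (m : ι → Matrix α β R)
    (m' : ι → Matrix β γ R) :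
    kroneckerPi m * kroneckerPi m' = kroneckerPi fun i => m i * m' i := by
  ext σ τ
  simp only [mul_apply, kroneckerPi, ← Finset.prod_mul_distrib]
  exact (Fintype.prod_sum fun i b => m i (σ i) b * m' i b (τ i)).symm

theorem kroneckerPi_conjTranspose [CommSemiring R] [StarRing R] (m : ι → Matrix α β R) :
    (kroneckerPi m)ᴴ = kroneckerPi fun i => (m i)ᴴ := by
  ext σ τ
  simp [kroneckerPi, conjTranspose_apply]

theorem kroneckerPi_one [CommSemiring R] [DecidableEq α] :
    kroneckerPi (fun _ : ι => (1 : Matrix α α R)) = 1 := by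
  ext σ τ
  simp only [kroneckerPi, one_apply, Fintype.prod_boole, funext_iff]

theorem kroneckerPi_mem_unitary [DecidableEq ι] [CommSemiring R] [StarRing R] [Fintype α]
    [DecidableEq α] {m : ι → Matrix α α R} (hm : ∀ i, m i ∈ unitary (Matrix α α R)) :
    kroneckerPi m ∈ unitary (Matrix (ι → α) (ι → α) R) := by
  simp only [Unitary.mem_iff, star_eq_conjTranspose, kroneckerPi_conjTranspose,
    kroneckerPi_mul]
  simp only [← star_eq_conjTranspose, Unitary.star_mul_self_of_mem (hm _),
    Unitary.mul_star_self_of_mem (hm _), kroneckerPi_one, and_self]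

end KroneckerPi

section TwoSites

variable {ι α R : Type*} [Fintype ι] [DecidableEq ι] {p q : ι}

theorem prod_update_update [CommMonoid R] (hpq : p ≠ q) (f : ι → α → R) (τ : ι → α)
    (a b : α) :
    ∏ y, f y (Function.update (Function.update τ p a) q b y)
      = f p a * f q b * ∏ y ∈ (Finset.univ.erase p).erase q, f y (τ y) := by
  have hq : q ∈ Finset.univ.erase p := Finset.mem_erase.mpr ⟨hpq.symm, Finset.mem_univ q⟩
  rw [← Finset.mul_prod_erase _ _ (Finset.mem_univ p), ← Finset.mul_prod_erase _ _ hq,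
    mul_assoc]
  refine congrArg₂ _ (by simp [Function.update_of_ne hpq]) (congrArg₂ _ (by simp)
    (Finset.prod_congr rfl fun y hy => ?_))
  obtain ⟨hyq, hyp⟩ : y ≠ q ∧ y ≠ p := by simpa using hy
  rw [Function.update_of_ne hyq, Function.update_of_ne hyp]

theorem sum_mul_prod_erase_erase_boole [Fintype α] [DecidableEq α] [CommSemiring R]
    (hpq : p ≠ q) (F : (ι → α) → R) (τ : ι → α) :
    ∑ ρ, F ρ * ∏ y ∈ (Finset.univ.erase p).erase q, (if ρ y = τ y then (1 : R) else 0)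
      = ∑ a, ∑ b, F (Function.update (Function.update τ p a) q b) := by
  set E := (Finset.univ.erase p).erase q
  have hE {y : ι} : y ∈ E ↔ y ≠ q ∧ y ≠ p := by simp [E]
  have hupd (ρ : ι → α) (hρ : ∀ y ∈ E, ρ y = τ y) :
      Function.update (Function.update τ p (ρ p)) q (ρ q) = ρ := by
    funext y
    by_cases hyq : y = q
    · subst hyq; simp
    by_cases hyp : y = p
    · subst hyp; simp [Function.update_of_ne hpq]
    rw [Function.update_of_ne hyq, Function.update_of_ne hyp, hρ y (hE.2 ⟨hyq, hyp⟩)]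
  calc _ = ∑ ρ with ∀ y ∈ E, ρ y = τ y, F ρ := by simp [Finset.sum_filter, Finset.prod_boole]
    _ = ∑ ab : α × α, F (Function.update (Function.update τ p ab.1) q ab.2) := by
      refine Finset.sum_nbij' (fun ρ => (ρ p, ρ q))
        (fun ab => Function.update (Function.update τ p ab.1) q ab.2) (by simp) ?_
        (fun ρ hρ => ?_) (by simp [Function.update_of_ne hpq]) (fun ρ hρ => ?_)
      · simp +contextual [hE, Function.update_of_ne]
      · exact hupd ρ (Finset.mem_filter.mp hρ).2
      · rw [hupd ρ (Finset.mem_filter.mp hρ).2]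
    _ = _ := Fintype.sum_prod_type _

end TwoSites

section Chain

variable {n ℓ : ℕ}

theorem kroneckerPi_mul_bondOp_apply (m : Fin (2 * ℓ) → Matrix (Fin n) (Fin n) ℂ)
    (A : Matrix (Fin n × Fin n) (Fin n × Fin n) ℂ) {p q : Fin (2 * ℓ)} (hpq : p ≠ q)
    (σ τ : Fin (2 * ℓ) → Fin n) :
    (kroneckerPi m * bondOp n ℓ A p q) σ τ
      = ((m p ⊗ₖ m q) * A) (σ p, σ q) (τ p, τ q)
        * ∏ y ∈ (Finset.univ.erase p).erase q, m y (σ y) (τ y) := by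
  simp only [mul_apply, bondOp, ← mul_assoc]
  rw [sum_mul_prod_erase_erase_boole hpq
    (fun ρ => kroneckerPi m σ ρ * A (ρ p, ρ q) (τ p, τ q))]
  simp only [kroneckerPi, prod_update_update hpq (fun y c => m y (σ y) c),
    Function.update_self, Function.update_of_ne hpq, Fintype.sum_prod_type, kroneckerMap_apply,
    Finset.sum_mul]
  exact Finset.sum_congr rfl fun a _ => Finset.sum_congr rfl fun b _ => by ring

theorem bondOp_mul_kroneckerPi_apply (m : Fin (2 * ℓ) → Matrix (Fin n) (Fin n) ℂ)
    (A : Matrix (Fin n × Fin n) (Fin n × Fin n) ℂ) {p q : Fin (2 * ℓ)} (hpq : p ≠ q)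
    (σ τ : Fin (2 * ℓ) → Fin n) :
    (bondOp n ℓ A p q * kroneckerPi m) σ τ
      = (A * (m p ⊗ₖ m q)) (σ p, σ q) (τ p, τ q)
        * ∏ y ∈ (Finset.univ.erase p).erase q, m y (σ y) (τ y) := by
  simp only [mul_apply, bondOp, mul_right_comm _ _ (kroneckerPi m _ τ), eq_comm (a := σ _)]
  rw [sum_mul_prod_erase_erase_boole hpq
    (fun ρ => A (σ p, σ q) (ρ p, ρ q) * kroneckerPi m ρ τ)]
  simp only [kroneckerPi, prod_update_update hpq (fun y c => m y c (τ y)),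
    Function.update_self, Function.update_of_ne hpq, Fintype.sum_prod_type, kroneckerMap_apply,
    Finset.sum_mul]
  exact Finset.sum_congr rfl fun a _ => Finset.sum_congr rfl fun b _ => by ring

theorem kroneckerPi_mul_bondOp (m : Fin (2 * ℓ) → Matrix (Fin n) (Fin n) ℂ)
    {A A' : Matrix (Fin n × Fin n) (Fin n × Fin n) ℂ} {p q : Fin (2 * ℓ)} (hpq : p ≠ q)
    (h : (m p ⊗ₖ m q) * A' = A * (m p ⊗ₖ m q)) :
    kroneckerPi m * bondOp n ℓ A' p q = bondOp n ℓ A p q * kroneckerPi m := by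
  ext σ τ
  rw [kroneckerPi_mul_bondOp_apply m A' hpq, bondOp_mul_kroneckerPi_apply m A hpq, h]

theorem kroneckerPi_mul_chainH (m : Fin (2 * ℓ) → Matrix (Fin n) (Fin n) ℂ)
    {A A' : Matrix (Fin n × Fin n) (Fin n × Fin n) ℂ}
    (h : ∀ (x : ℕ) (hx : x + 1 < 2 * ℓ),
      (m ⟨x, by omega⟩ ⊗ₖ m ⟨x + 1, hx⟩) * A' = A * (m ⟨x, by omega⟩ ⊗ₖ m ⟨x + 1, hx⟩)) :
    kroneckerPi m * chainH n ℓ A' = chainH n ℓ A * kroneckerPi m := by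
  simp only [chainH, Matrix.mul_sum, Matrix.sum_mul]
  refine Finset.sum_congr rfl fun x _ => ?_
  split_ifs with hx
  · exact kroneckerPi_mul_bondOp m (Fin.ne_of_val_ne (Nat.ne_add_one x)) (h x hx)
  · simp

end Chain

theorem mul_vecMulVec_star_eq_of_mulVec_eq {m R : Type*} [Fintype m] [DecidableEq m]
    [CommSemiring R] [StarRing R] {U : Matrix m m R} (hU : Uᴴ * U = 1) {x y : m → R}
    (h : U *ᵥ x = y) :
    U * vecMulVec x (star x) = vecMulVec y (star y) * U := by
  have hx : Uᴴ *ᵥ y = x := by rw [← h, mulVec_mulVec, hU, one_mulVec]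
  rw [mul_vecMulVec, h, vecMulVec_mul, ← conjTranspose_conjTranspose U, ← star_mulVec, hx]

theorem exists_mulVec_eq_smul_of_mul_eq {m R : Type*} [Fintype m] [DecidableEq m]
    [CommSemiring R] {W W' A B : Matrix m m R} (hW : W' * W = 1) (h : W * A = B * W) {μ : R}
    (hA : ∃ w, w ≠ 0 ∧ A *ᵥ w = μ • w) : ∃ w, w ≠ 0 ∧ B *ᵥ w = μ • w := by
  obtain ⟨w, hw0, hw⟩ := hA
  refine ⟨W *ᵥ w, fun h0 => hw0 ?_, ?_⟩
  · simpa [mulVec_mulVec, hW] using congrArg (W' *ᵥ ·) h0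
  · rw [mulVec_mulVec, ← h, ← mulVec_mulVec, hw, mulVec_smul]

theorem exists_mulVec_eq_smul_iff_of_mem_unitary {m R : Type*} [Fintype m] [DecidableEq m]
    [CommSemiring R] [StarRing R] {U A B : Matrix m m R} (hU : U ∈ unitary (Matrix m m R))
    (h : U * A = B * U) (μ : R) :
    (∃ w, w ≠ 0 ∧ A *ᵥ w = μ • w) ↔ ∃ w, w ≠ 0 ∧ B *ᵥ w = μ • w := by
  have h' : star U * B = A * star U := by
    rw [← mul_one (star U * B), ← Unitary.mul_star_self_of_mem hU, ← mul_assoc, mul_assoc _ B,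
      ← h, ← mul_assoc, Unitary.star_mul_self_of_mem hU, one_mul]
  exact ⟨exists_mulVec_eq_smul_of_mul_eq hU.1 h, exists_mulVec_eq_smul_of_mul_eq hU.2 h'⟩

section SpinFlip

variable {n : ℕ}

theorem Vop_apply (i j : Fin n) : Vop n i j = if j = i.rev then (-1) ^ (i : ℕ) else 0 := by
  have hi := i.isLt
  have hrev : j = i.rev ↔ (i : ℕ) + j = n - 1 := by rw [Fin.ext_iff, Fin.val_rev]; omega
  simp only [Vop, hrev]
  split_ifs with h
  · congr 1; omega
  · rfl

theorem neg_one_pow_rev (hn : Even n) (i : Fin n) :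
    (-1 : ℂ) ^ (i.rev : ℕ) = -(-1) ^ (i : ℕ) := by
  have hsum : (i.rev : ℕ) + i = n - 1 := by rw [Fin.val_rev]; omega
  have h : (-1 : ℂ) ^ (i.rev : ℕ) * (-1) ^ (i : ℕ) = -1 := by
    rw [← pow_add, hsum, (Nat.Even.sub_odd i.pos hn odd_one).neg_one_pow]
  have hsq : (-1 : ℂ) ^ (i : ℕ) * (-1) ^ (i : ℕ) = 1 := by simp [← mul_pow]
  linear_combination (-1 : ℂ) ^ (i : ℕ) * h - (-1 : ℂ) ^ (i.rev : ℕ) * hsq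

theorem Vop_transpose (hn : Even n) : (Vop n)ᵀ = -Vop n := by
  ext i j
  simp only [transpose_apply, Matrix.neg_apply, Vop_apply]
  by_cases h : j = i.rev
  · subst h
    rw [if_pos (Fin.rev_rev i).symm, if_pos rfl, neg_one_pow_rev hn]
  · rw [if_neg fun hi => h (by rw [hi, Fin.rev_rev]), if_neg h, neg_zero]

theorem Vop_mul_self (hn : Even n) : Vop n * Vop n = -1 := by
  ext i k
  simp only [mul_apply, Vop_apply, ite_mul, zero_mul, Finset.sum_ite_eq', Finset.mem_univ,
    if_true, Fin.rev_rev, Matrix.neg_apply, Matrix.one_apply, neg_one_pow_rev hn]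
  by_cases h : k = i
  · subst h
    rw [if_pos rfl, if_pos rfl, mul_neg, ← mul_pow]
    simp
  · rw [if_neg h, if_neg (Ne.symm h), mul_zero, neg_zero]

theorem Vop_conjTranspose : (Vop n)ᴴ = (Vop n)ᵀ := by
  ext i j
  simp only [conjTranspose_apply, transpose_apply, Vop_apply]
  split_ifs <;> simp

theorem Vop_mem_unitary (hn : Even n) : Vop n ∈ unitary (Matrix (Fin n) (Fin n) ℂ) := by
  simp [Unitary.mem_iff, star_eq_conjTranspose, Vop_conjTranspose, Vop_transpose hn,
    Vop_mul_self hn]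

end SpinFlip

section TwoSiteIdentities

variable {n : ℕ}

theorem transOp_mul_kronecker (A B : Matrix (Fin n) (Fin n) ℂ) :
    transOp n * (A ⊗ₖ B) = (B ⊗ₖ A) * transOp n := by
  ext ⟨i, j⟩ ⟨k, l⟩
  simp [mul_apply, Fintype.sum_prod_type, transOp, ite_and, mul_comm]

theorem Vop_kronecker_one_mul_transOpTilde (hn : Even n) :
    (Vop n ⊗ₖ 1) * transOpTilde n = transOp n * (Vop n ⊗ₖ 1) := by
  rw [transOpTilde, mul_neg, ← mul_assoc, ← mul_kronecker_mul, Vop_mul_self hn, one_mul,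
    ← neg_one_smul ℂ 1, smul_kronecker, neg_one_smul, neg_mul, neg_neg, transOp_mul_kronecker]

theorem one_kronecker_Vop_mul_transOpTilde (hn : Even n) :
    (1 ⊗ₖ Vop n) * transOpTilde n = transOp n * (1 ⊗ₖ Vop n) := by
  rw [transOpTilde, mul_neg, ← mul_assoc, ← mul_kronecker_mul, Vop_mul_self hn, one_mul,
    ← neg_one_smul ℂ 1, kronecker_smul, neg_one_smul, neg_mul, neg_neg, transOp_mul_kronecker]

theorem phiVec_apply (i j : Fin n) : phiVec n (i, j) = Vop n j i * (Real.sqrt n : ℂ)⁻¹ := by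
  simp [phiVec, Vop, add_comm (j : ℕ)]

theorem one_kronecker_Vop_mulVec_psiVec : (1 ⊗ₖ Vop n) *ᵥ psiVec n = phiVec n := by
  ext ⟨i, j⟩
  simp [mulVec, dotProduct, Fintype.sum_prod_type, psiVec, phiVec_apply, Matrix.one_apply]

theorem Vop_kronecker_one_mulVec_psiVec (hn : Even n) :
    (Vop n ⊗ₖ 1) *ᵥ psiVec n = -phiVec n := by
  ext ⟨i, j⟩
  simp only [mulVec, dotProduct, kroneckerMap_apply, Matrix.one_apply, mul_ite, mul_one, mul_zero,
    psiVec, ite_mul, zero_mul, Fintype.sum_prod_type, Finset.sum_ite_eq, Finset.mem_univ,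
    if_true, Pi.neg_apply, phiVec_apply]
  rw [← transpose_apply (Vop n) i j, Vop_transpose hn, Matrix.neg_apply, neg_mul, neg_neg]

theorem QOp_eq_vecMulVec : QOp n = vecMulVec (psiVec n) (star (psiVec n)) := rfl

theorem Pproj_eq_vecMulVec : Pproj n = vecMulVec (phiVec n) (star (phiVec n)) := rfl

theorem Vop_kronecker_one_mul_QOp (hn : Even n) :
    (Vop n ⊗ₖ 1) * QOp n = Pproj n * (Vop n ⊗ₖ 1) := by
  have hU := kronecker_mem_unitary (Vop_mem_unitary hn)
    (unitary (Matrix (Fin n) (Fin n) ℂ)).one_mem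
  rw [QOp_eq_vecMulVec, Pproj_eq_vecMulVec, ← neg_neg (phiVec n), star_neg, neg_vecMulVec,
    vecMulVec_neg, neg_neg]
  exact mul_vecMulVec_star_eq_of_mulVec_eq (Unitary.star_mul_self_of_mem hU)
    (Vop_kronecker_one_mulVec_psiVec hn)

theorem one_kronecker_Vop_mul_QOp (hn : Even n) :
    (1 ⊗ₖ Vop n) * QOp n = Pproj n * (1 ⊗ₖ Vop n) :=
  mul_vecMulVec_star_eq_of_mulVec_eq
    (Unitary.star_mul_self_of_mem (kronecker_mem_unitary (unitary _).one_mem (Vop_mem_unitary hn)))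
    one_kronecker_Vop_mulVec_psiVec

end TwoSiteIdentities
section Staggered

variable {n ℓ : ℕ}

noncomputable def staggeredFactor (n ℓ : ℕ) (p : Fin (2 * ℓ)) : Matrix (Fin n) (Fin n) ℂ :=
  if Even (p : ℕ) then Vop n else 1

theorem staggeredW_eq_kroneckerPi : staggeredW n ℓ = kroneckerPi (staggeredFactor n ℓ) := by
  ext σ τ
  refine Finset.prod_congr rfl fun p _ => ?_
  rw [staggeredFactor, apply_ite (fun M : Matrix (Fin n) (Fin n) ℂ => M (σ p) (τ p)),
    Matrix.one_apply]

theorem staggeredW_mem_unitary (hn : Even n) :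
    staggeredW n ℓ ∈ unitary (Matrix (Fin (2 * ℓ) → Fin n) (Fin (2 * ℓ) → Fin n) ℂ) := by
  rw [staggeredW_eq_kroneckerPi]
  refine kroneckerPi_mem_unitary fun p => ?_
  unfold staggeredFactor
  split_ifs
  · exact Vop_mem_unitary hn
  · exact (unitary _).one_mem

theorem staggeredFactor_kronecker_mul (hn : Even n) (u v : ℂ) (x : ℕ) (hx : x + 1 < 2 * ℓ) :
    (staggeredFactor n ℓ ⟨x, by omega⟩ ⊗ₖ staggeredFactor n ℓ ⟨x + 1, hx⟩)
        * (u • transOpTilde n + v • QOp n)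
      = (u • transOp n + v • Pproj n)
        * (staggeredFactor n ℓ ⟨x, by omega⟩ ⊗ₖ staggeredFactor n ℓ ⟨x + 1, hx⟩) := by
  set S := staggeredFactor n ℓ ⟨x, by omega⟩ ⊗ₖ staggeredFactor n ℓ ⟨x + 1, hx⟩
  obtain ⟨hT, hQ⟩ : S * transOpTilde n = transOp n * S ∧ S * QOp n = Pproj n * S := by
    by_cases h : Even x
    · simp only [S, staggeredFactor, h, Nat.even_add_one, not_true_eq_false, if_true, if_false]
      exact ⟨Vop_kronecker_one_mul_transOpTilde hn, Vop_kronecker_one_mul_QOp hn⟩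
    · simp only [S, staggeredFactor, h, Nat.even_add_one, not_false_eq_true, if_true, if_false]
      exact ⟨one_kronecker_Vop_mul_transOpTilde hn, one_kronecker_Vop_mul_QOp hn⟩
  rw [Matrix.mul_add, Matrix.add_mul, Matrix.mul_smul, Matrix.mul_smul, Matrix.smul_mul,
    Matrix.smul_mul, hT, hQ]

theorem staggeredW_mul_chainH (hn : Even n) (u v : ℂ) :
    staggeredW n ℓ * chainH n ℓ (u • transOpTilde n + v • QOp n)
      = chainH n ℓ (u • transOp n + v • Pproj n) * staggeredW n ℓ := by
  rw [staggeredW_eq_kroneckerPi]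
  exact kroneckerPi_mul_chainH _ (staggeredFactor_kronecker_mul hn u v)

end Staggered

theorem staggered_unitary_equivalence_general (n : ℕ) (hne : Even n)
    (u v : ℝ) (ℓ : ℕ) :
    (staggeredW n ℓ * (staggeredW n ℓ)ᴴ = 1 ∧ (staggeredW n ℓ)ᴴ * staggeredW n ℓ = 1) ∧
    staggeredW n ℓ * chainH n ℓ ((u : ℂ) • transOpTilde n + (v : ℂ) • QOp n) *
        (staggeredW n ℓ)ᴴ
      = chainH n ℓ ((u : ℂ) • transOp n + (v : ℂ) • Pproj n) ∧
    (∀ μ : ℂ,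
      (∃ w : ((Fin (2 * ℓ)) → Fin n) → ℂ, w ≠ 0 ∧
        chainH n ℓ ((u : ℂ) • transOpTilde n + (v : ℂ) • QOp n) *ᵥ w = μ • w) ↔
      (∃ w : ((Fin (2 * ℓ)) → Fin n) → ℂ, w ≠ 0 ∧
        chainH n ℓ ((u : ℂ) • transOp n + (v : ℂ) • Pproj n) *ᵥ w = μ • w)) := by
  have hW := staggeredW_mem_unitary (ℓ := ℓ) hne
  have hWH := staggeredW_mul_chainH (ℓ := ℓ) hne u v
  refine ⟨⟨hW.2, hW.1⟩, ?_, exists_mulVec_eq_smul_iff_of_mem_unitary hW hWH⟩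
  rw [hWH, mul_assoc, ← star_eq_conjTranspose, Unitary.mul_star_self_of_mem hW, mul_one]

/-- Appendix A, Proposition A.1 (`n` even): the staggered unitary `W` conjugates
`H'_ℓ = Σ (u T̃ + v Q)_{x,x+1}` into `H̃_ℓ = Σ (u T + v P)_{x,x+1}`; in particular the two
Hamiltonians are unitarily equivalent and have the same spectrum. -/
theorem staggered_unitary_equivalence (n : ℕ) (hn : 2 ≤ n) (hne : Even n)
    (u v : ℝ) (ℓ : ℕ) (hℓ : 1 ≤ ℓ) :
    (staggeredW n ℓ * (staggeredW n ℓ)ᴴ = 1 ∧ (staggeredW n ℓ)ᴴ * staggeredW n ℓ = 1) ∧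
    staggeredW n ℓ * chainH n ℓ ((u : ℂ) • transOpTilde n + (v : ℂ) • QOp n) *
        (staggeredW n ℓ)ᴴ
      = chainH n ℓ ((u : ℂ) • transOp n + (v : ℂ) • Pproj n) ∧
    (∀ μ : ℂ,
      (∃ w : ((Fin (2 * ℓ)) → Fin n) → ℂ, w ≠ 0 ∧
        chainH n ℓ ((u : ℂ) • transOpTilde n + (v : ℂ) • QOp n) *ᵥ w = μ • w) ↔
      (∃ w : ((Fin (2 * ℓ)) → Fin n) → ℂ, w ≠ 0 ∧
        chainH n ℓ ((u : ℂ) • transOp n + (v : ℂ) • Pproj n) *ᵥ w = μ • w)) :=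
  staggered_unitary_equivalence_general n hne u v ℓ
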